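/- Let k ≥ 1 be a natural number and let ŵ : Fin k → ℝ be strictly positive. Let c* = (∏_{j} ŵ_j)^{1/k} be the geometric mean of the ŵ_j. Then for every real c ≥ 0, ∑_{j} (c*·log(c*/ŵ_j) + ŵ_j − c*) ≤ ∑_{j} (c·log(c/ŵ_j) + ŵ_j − c). (That is, the relative entropy projection of ŵ onto the constraint that all k coordinates are equal sets every coordinate to the geometric mean of the coordinates of ŵ.) -/

import Mathlib

open Real Finset

/-!
The geometric mean `c*` is exactly the constant with `∑ⱼ log (c*/ŵⱼ) = 0`, and for such a
constant relative entropy satisfies the Pythagorean identity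
`Δ(c·1‖ŵ) = Δ(c·1‖c*·1) + Δ(c*·1‖ŵ)`, whose first term is nonnegative.
-/

/-- `Δ(a‖b)`; the convention `0 · log 0 = 0` is Lean's `log 0 = 0`. -/
noncomputable def relEnt {ι : Type*} [Fintype ι] (a b : ι → ℝ) : ℝ :=
  ∑ i, (a i * log (a i / b i) + b i - a i)

lemma mul_log_div_add_sub_nonneg {a b : ℝ} (ha : 0 ≤ a) (hb : 0 < b) :
    0 ≤ a * log (a / b) + b - a := by
  have hb' : b ≠ 0 := hb.ne'
  calc 0 ≤ b * InformationTheory.klFun (a / b) :=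
        mul_nonneg hb.le (InformationTheory.klFun_nonneg (div_nonneg ha hb.le))
    _ = a * log (a / b) + b - a := by
      simp only [InformationTheory.klFun]
      field_simp

lemma mul_log_div_eq_add {m w : ℝ} (hm : m ≠ 0) (hw : w ≠ 0) (c : ℝ) :
    c * log (c / w) = c * log (c / m) + c * log (m / w) := by
  rcases eq_or_ne c 0 with rfl | hc
  · simp
  · rw [← mul_add, ← log_mul (div_ne_zero hc hm) (div_ne_zero hm hw), div_mul_div_cancel₀ hm]

section RelEnt

variable {ι : Type*} [Fintype ι]

lemma relEnt_nonneg {a b : ι → ℝ} (ha : 0 ≤ a) (hb : ∀ i, 0 < b i) : 0 ≤ relEnt a b :=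
  sum_nonneg fun i _ ↦ mul_log_div_add_sub_nonneg (ha i) (hb i)

lemma relEnt_const_eq_add {b : ι → ℝ} {m : ℝ} (hm : m ≠ 0) (hb : ∀ i, b i ≠ 0)
    (hsum : ∑ i, log (m / b i) = 0) (c : ℝ) :
    relEnt (fun _ ↦ c) b = relEnt (fun _ : ι ↦ c) (fun _ ↦ m) + relEnt (fun _ ↦ m) b := by
  have hterm : ∀ i, c * log (c / b i) + b i - c =
      (c * log (c / m) + m - c) + (m * log (m / b i) + b i - m) + (c - m) * log (m / b i) := by
    intro i
    rw [mul_log_div_eq_add hm (hb i)]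
    ring
  simp only [relEnt, hterm, sum_add_distrib, ← mul_sum, hsum, mul_zero, add_zero]

lemma sum_log_geomMean_div {w : ι → ℝ} (hw : ∀ i, 0 < w i) :
    ∑ i, log ((∏ j, w j) ^ (1 / Fintype.card ι : ℝ) / w i) = 0 := by
  rcases isEmpty_or_nonempty ι with hι | hι
  · simp
  have hcard : (Fintype.card ι : ℝ) ≠ 0 := by simp
  have hprod : 0 < ∏ j, w j := prod_pos fun j _ ↦ hw j
  simp only [log_div (rpow_pos_of_pos hprod _).ne' (hw _).ne', sum_sub_distrib, sum_const,
    card_univ, nsmul_eq_mul, log_rpow hprod, log_prod fun j _ ↦ (hw j).ne']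
  field_simp
  ring

end RelEnt

theorem relEnt_proj_geometric_mean_general
    (k : ℕ)
    (what : Fin k → ℝ) (hwhat : ∀ j, 0 < what j)
    (cstar : ℝ) (hcstar : cstar = (∏ j, what j) ^ ((1 : ℝ) / k)) :
    ∀ c : ℝ, 0 ≤ c →
      ∑ j, (cstar * Real.log (cstar / what j) + what j - cstar) ≤
        ∑ j, (c * Real.log (c / what j) + what j - c) := by
  intro c hc
  have hcstar_pos : 0 < cstar := hcstar ▸ rpow_pos_of_pos (prod_pos fun j _ ↦ hwhat j) _
  have hsum : ∑ j, log (cstar / what j) = 0 := by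
    simpa only [Fintype.card_fin, ← hcstar] using sum_log_geomMean_div hwhat
  change relEnt (fun _ ↦ cstar) what ≤ relEnt (fun _ ↦ c) what
  rw [relEnt_const_eq_add hcstar_pos.ne' (fun j ↦ (hwhat j).ne') hsum c]
  exact le_add_of_nonneg_left (relEnt_nonneg (fun _ ↦ hc) fun _ ↦ hcstar_pos)

/-- The relative entropy projection of a positive vector `ŵ : Fin k → ℝ`
onto the constraint that all `k` coordinates are equal sets every coordinate
to the geometric mean `c* = (∏ⱼ ŵⱼ)^{1/k}` of the coordinates of `ŵ`:
for every admissible constant vector `c·1` (with `c ≥ 0`),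
`Δ(c*·1‖ŵ) ≤ Δ(c·1‖ŵ)`. -/
theorem relEnt_proj_geometric_mean
    (k : ℕ) (hk : 1 ≤ k)
    (what : Fin k → ℝ) (hwhat : ∀ j, 0 < what j)
    (cstar : ℝ) (hcstar : cstar = (∏ j, what j) ^ ((1 : ℝ) / k)) :
    ∀ c : ℝ, 0 ≤ c →
      ∑ j, (cstar * Real.log (cstar / what j) + what j - cstar) ≤
        ∑ j, (c * Real.log (c / what j) + what j - c) :=
  relEnt_proj_geometric_mean_general k what hwhat cstar hcstar
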